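/- Let f : S² → ℝ be continuous and let ν > 0 be such that for every p ∈ S² and every unit tangent vector u at p there exists a unit tangent vector v at p with ⟨u,v⟩ > 0 and ∫₀^π f(γ_{p,v}(t)) dt < −ν. Then there exists ε > 0 such that for all p, q ∈ S² with π − ε ≤ ρ(p,q) ≤ π there exists m ∈ S² with 0 < ρ(p,m) = ρ(m,q), ρ(p,m) + ρ(m,q) ≤ π, and I_f(p,m) + I_f(m,q) < −ν. -/

import Mathlib

open scoped RealInnerProductSpace
open Real

noncomputable section

/-- Euclidean 3-space. -/
abbrev E3 : Type := EuclideanSpace ℝ (Fin 3)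

/-- The unit sphere S² in ℝ³. -/
def sphere2 : Set E3 := {x : E3 | ‖x‖ = 1}

/-- The round (geodesic) distance ρ(p,q) = arccos⟨p,q⟩ on S². -/
def rho (p q : E3) : ℝ := Real.arccos ⟪p, q⟫

/-- `UnitTangent p v` : `v` is a unit tangent vector at `p`. -/
def UnitTangent (p v : E3) : Prop := ‖v‖ = 1 ∧ ⟪p, v⟫ = 0

/-- The unit-speed great-circle arc γ_{p,v}(t) = (cos t)·p + (sin t)·v. -/
def geo (p v : E3) (t : ℝ) : E3 := (Real.cos t) • p + (Real.sin t) • v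
/-- The minimizing great-circle arc from `x` to `y` (for `0 < ρ(x,y) < π`):
`c_{x,y}(t) = (sin(ρ(x,y) − t)·x + sin(t)·y) / sin(ρ(x,y))`. -/
def arcPath (x y : E3) (t : ℝ) : E3 :=
  (Real.sin (rho x y - t) / Real.sin (rho x y)) • x +
    (Real.sin t / Real.sin (rho x y)) • y

/-- `I_h(x,y) = ∫₀^{ρ(x,y)} h(c_{x,y}(t)) dt`. -/
def Iint (h : E3 → ℝ) (x y : E3) : ℝ :=
  ∫ t in (0:ℝ)..(rho x y), h (arcPath x y t)

/-! Compactness. If no `ε` works, there are pairs `pₙ, qₙ` with `ρ(pₙ, qₙ) → π` admitting no good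
midpoint. Write `qₙ = γ_{pₙ,wₙ}(ρ(pₙ, qₙ))` and pass to a subsequence with `pₙ → p`, `wₙ → e`;
the hypothesis at `(p, e)` yields `v` with `⟨e, v⟩ > 0` and `∫₀^π f ∘ γ_{p,v} < -ν`. Normalising the
component of `v` orthogonal to `pₙ - qₙ` gives points `mₙ` equidistant from `pₙ` and `qₙ` with
`mₙ → v`, so by continuity of `I_f` the broken geodesics `pₙ mₙ qₙ` have integral tending to
`I_f(p, v) + I_f(v, -p) = ∫₀^π f ∘ γ_{p,v} < -ν`. They have length at most `π` because
`⟨pₙ, mₙ⟩` has the sign of `⟨pₙ + qₙ, v⟩ = 2 cos(ρₙ/2) ⟨γ_{pₙ,wₙ}(ρₙ/2), v⟩`, and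
`γ_{pₙ,wₙ}(ρₙ/2) → e`. -/

open Filter Topology

section InnerProductSpace

variable {F : Type*} [NormedAddCommGroup F] [InnerProductSpace ℝ F]

lemma norm_smul_add_smul_sq (x y : F) (a b : ℝ) :
    ‖a • x + b • y‖ ^ 2 = a ^ 2 * ‖x‖ ^ 2 + 2 * (a * b * ⟪x, y⟫) + b ^ 2 * ‖y‖ ^ 2 := by
  rw [norm_add_sq_real, real_inner_smul_left, real_inner_smul_right, norm_smul, norm_smul,
    Real.norm_eq_abs, Real.norm_eq_abs, mul_pow, mul_pow, sq_abs, sq_abs]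
  ring

def perpPart (d v : F) : F := v - (⟪d, v⟫ / ‖d‖ ^ 2) • d

lemma inner_perpPart (d v : F) : ⟪d, perpPart d v⟫ = 0 := by
  rcases eq_or_ne d 0 with rfl | hd
  · simp
  rw [perpPart, inner_sub_right, real_inner_smul_right, real_inner_self_eq_norm_sq]
  field_simp
  ring

lemma two_mul_inner_perpPart_sub {p q : F} (h : ‖p‖ = ‖q‖) (v : F) :
    2 * ⟪p, perpPart (p - q) v⟫ = ⟪p + q, v⟫ := by
  have hpq : ⟪p + q, p - q⟫ = 0 := by
    rw [inner_add_left, inner_sub_right, inner_sub_right, real_inner_self_eq_norm_sq,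
      real_inner_self_eq_norm_sq, h, real_inner_comm]
    ring
  have := inner_perpPart (p - q) v
  rw [inner_sub_left] at this
  calc 2 * ⟪p, perpPart (p - q) v⟫ = ⟪p + q, perpPart (p - q) v⟫ := by
        rw [inner_add_left]; linarith
    _ = ⟪p + q, v⟫ := by
        rw [perpPart, inner_sub_right, real_inner_smul_right, hpq, mul_zero, sub_zero]

lemma tendsto_perpPart {α : Type*} {l : Filter α} {d : α → F} {d₀ : F}
    (hd : Tendsto d l (𝓝 d₀)) (hd₀ : d₀ ≠ 0) {v : F} (hv : ⟪d₀, v⟫ = 0) :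
    Tendsto (fun k => perpPart (d k) v) l (𝓝 v) := by
  have h : Tendsto (fun k => perpPart (d k) v) l (𝓝 (perpPart d₀ v)) := by
    unfold perpPart
    exact tendsto_const_nhds.sub (((hd.inner tendsto_const_nhds).div (hd.norm.pow 2)
      (by simpa using hd₀)).smul hd)
  simpa [perpPart, hv] using h

def bisector (p q v : F) : F := ‖perpPart (p - q) v‖⁻¹ • perpPart (p - q) v

lemma inner_sub_bisector (p q v : F) : ⟪p - q, bisector p q v⟫ = 0 := by
  rw [bisector, real_inner_smul_right, inner_perpPart, mul_zero]

lemma inner_bisector_nonneg {p q v : F} (h : ‖p‖ = ‖q‖) (hv : 0 ≤ ⟪p + q, v⟫) :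
    0 ≤ ⟪p, bisector p q v⟫ := by
  have h₂ := two_mul_inner_perpPart_sub h v
  rw [bisector, real_inner_smul_right]
  exact mul_nonneg (inv_nonneg.2 (norm_nonneg _)) (by linarith)

end InnerProductSpace

lemma sphere2_eq : sphere2 = Metric.sphere (0 : E3) 1 := by
  ext x; simp [sphere2]

lemma isCompact_sphere2 : IsCompact sphere2 := sphere2_eq ▸ isCompact_sphere _ _

lemma mem_sphere2_of_sq {x : E3} (h : ‖x‖ ^ 2 = 1) : x ∈ sphere2 :=
  (pow_eq_one_iff_of_nonneg (norm_nonneg x) two_ne_zero).1 h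

lemma cos_rho {x y : E3} (hx : x ∈ sphere2) (hy : y ∈ sphere2) : cos (rho x y) = ⟪x, y⟫ := by
  have h := abs_real_inner_le_norm x y
  rw [show ‖x‖ = 1 from hx, show ‖y‖ = 1 from hy, one_mul] at h
  exact cos_arccos (neg_le_of_abs_le h) (le_of_abs_le h)

lemma tendsto_rho {α : Type*} {l : Filter α} {x y : α → E3} {x₀ y₀ : E3}
    (hx : Tendsto x l (𝓝 x₀)) (hy : Tendsto y l (𝓝 y₀)) :
    Tendsto (fun k => rho (x k) (y k)) l (𝓝 (rho x₀ y₀)) :=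
  (continuous_arccos.tendsto _).comp (hx.inner hy)

lemma rho_eq_pi_div_two {x y : E3} (h : ⟪x, y⟫ = 0) : rho x y = π / 2 := by
  rw [rho, h, arccos_zero]

lemma exists_unitTangent (p : E3) : ∃ v, UnitTangent p v := by
  have hspan : (ℝ ∙ p) ≠ ⊤ := by
    intro h
    have h₁ := finrank_span_le_card (R := ℝ) ({p} : Set E3)
    rw [h, finrank_top, finrank_euclideanSpace] at h₁
    simp at h₁
  obtain ⟨w, hw, hw₀⟩ := Submodule.exists_mem_ne_zero_of_ne_bot
    ((Submodule.orthogonal_eq_bot_iff).not.2 hspan)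
  refine ⟨‖w‖⁻¹ • w, norm_smul_inv_norm hw₀, ?_⟩
  rw [real_inner_smul_right, Submodule.mem_orthogonal_singleton_iff_inner_right.1 hw, mul_zero]

lemma exists_unitTangent_eq_geo {p q : E3} (hp : p ∈ sphere2) (hq : q ∈ sphere2) :
    ∃ w, UnitTangent p w ∧ q = geo p w (rho p q) := by
  set c := cos (rho p q)
  set s := sin (rho p q)
  have hc : c = ⟪p, q⟫ := cos_rho hp hq
  have hnorm : ‖q - c • p‖ ^ 2 = s ^ 2 := by
    rw [norm_sub_sq_real, real_inner_smul_right, norm_smul, Real.norm_eq_abs, mul_pow, sq_abs,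
      show ‖p‖ = 1 from hp, show ‖q‖ = 1 from hq, real_inner_comm, ← hc]
    nlinarith [sin_sq_add_cos_sq (rho p q)]
  rcases eq_or_ne s 0 with hs | hs
  · obtain ⟨w, hw⟩ := exists_unitTangent p
    refine ⟨w, hw, ?_⟩
    have hqp : q = c • p := by simpa [hs, sub_eq_zero] using hnorm
    change q = c • p + s • w
    rw [← hqp, hs, zero_smul, add_zero]
  · refine ⟨s⁻¹ • (q - c • p), ⟨?_, ?_⟩, ?_⟩
    · rw [norm_smul, norm_inv, Real.norm_eq_abs, (sq_eq_sq₀ (norm_nonneg _) (abs_nonneg s)).1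
        (by rw [hnorm, sq_abs])]
      exact inv_mul_cancel₀ (abs_ne_zero.2 hs)
    · rw [real_inner_smul_right, inner_sub_right, real_inner_smul_right,
        real_inner_self_eq_norm_sq, show ‖p‖ = 1 from hp, ← hc]
      ring
    · rw [geo, smul_smul, mul_inv_cancel₀ hs, one_smul]
      abel

def IsShortMidpoint (p q m : E3) : Prop :=
  m ∈ sphere2 ∧ 0 < rho p m ∧ rho p m = rho m q ∧ rho p m + rho m q ≤ π

lemma isShortMidpoint_bisector {p q v : E3} (hp : p ∈ sphere2) (hq : q ∈ sphere2)
    (hP : perpPart (p - q) v ≠ 0) (hlt : ⟪p, bisector p q v⟫ < 1) (hv : 0 ≤ ⟪p + q, v⟫) :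
    IsShortMidpoint p q (bisector p q v) := by
  have heq : rho p (bisector p q v) = rho (bisector p q v) q := by
    have h := inner_sub_bisector p q v
    rw [inner_sub_left, sub_eq_zero] at h
    rw [rho, rho, h, real_inner_comm]
  have hle : rho p (bisector p q v) ≤ π / 2 :=
    arccos_le_pi_div_two.2 (inner_bisector_nonneg (hp.trans hq.symm) hv)
  exact ⟨norm_smul_inv_norm hP, arccos_pos.2 hlt, heq, by linarith⟩

lemma tendsto_geo {α : Type*} {l : Filter α} {p w : α → E3} {t : α → ℝ} {p₀ w₀ : E3} {t₀ : ℝ}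
    (hp : Tendsto p l (𝓝 p₀)) (hw : Tendsto w l (𝓝 w₀)) (ht : Tendsto t l (𝓝 t₀)) :
    Tendsto (fun k => geo (p k) (w k) (t k)) l (𝓝 (geo p₀ w₀ t₀)) :=
  (((continuous_cos.tendsto t₀).comp ht).smul hp).add
    (((continuous_sin.tendsto t₀).comp ht).smul hw)

lemma add_geo (p w : E3) (t : ℝ) : p + geo p w t = (2 * cos (t / 2)) • geo p w (t / 2) := by
  have hc : cos t = 2 * cos (t / 2) ^ 2 - 1 := by rw [← cos_two_mul]; ring_nf
  have hs : sin t = 2 * sin (t / 2) * cos (t / 2) := by rw [← sin_two_mul]; ring_nf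
  simp only [geo, hc, hs, smul_add, smul_smul]
  module

lemma geo_mem_sphere2 {p v : E3} (hp : p ∈ sphere2) (hv : UnitTangent p v) (t : ℝ) :
    geo p v t ∈ sphere2 := by
  apply mem_sphere2_of_sq
  rw [geo, norm_smul_add_smul_sq, hv.2, show ‖p‖ = 1 from hp, hv.1]
  nlinarith [sin_sq_add_cos_sq t]

lemma arcPath_mem_sphere2 {x y : E3} (hx : x ∈ sphere2) (hy : y ∈ sphere2)
    (hs : sin (rho x y) ≠ 0) (t : ℝ) : arcPath x y t ∈ sphere2 := by
  apply mem_sphere2_of_sq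
  rw [arcPath, norm_smul_add_smul_sq, show ‖x‖ = 1 from hx, show ‖y‖ = 1 from hy,
    ← cos_rho hx hy, sin_sub]
  field_simp
  linear_combination sin (rho x y) ^ 2 * sin_sq_add_cos_sq t -
    sin t ^ 2 * sin_sq_add_cos_sq (rho x y)

lemma arcPath_of_inner_eq_zero {p v : E3} (hpv : ⟪p, v⟫ = 0) (t : ℝ) :
    arcPath p v t = geo p v t := by
  rw [arcPath, geo, rho_eq_pi_div_two hpv, sin_pi_div_two, sin_pi_div_two_sub]
  simp

lemma arcPath_neg_of_inner_eq_zero {p v : E3} (hpv : ⟪p, v⟫ = 0) (t : ℝ) :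
    arcPath v (-p) t = geo p v (t + π / 2) := by
  have hvp : ⟪v, -p⟫ = 0 := by rw [inner_neg_right, real_inner_comm, hpv, neg_zero]
  rw [arcPath, geo, rho_eq_pi_div_two hvp, sin_pi_div_two, sin_pi_div_two_sub,
    cos_add_pi_div_two, sin_add_pi_div_two]
  simp only [div_one, smul_neg, neg_smul]
  abel

lemma continuousOn_Iint {f : E3 → ℝ} (hf : ContinuousOn f sphere2) :
    ContinuousOn (fun z : E3 × E3 => Iint f z.1 z.2)
      {z | z.1 ∈ sphere2 ∧ z.2 ∈ sphere2 ∧ sin (rho z.1 z.2) ≠ 0} := by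
  rw [continuousOn_iff_continuous_domRestrict]
  set S := {z : E3 × E3 | z.1 ∈ sphere2 ∧ z.2 ∈ sphere2 ∧ sin (rho z.1 z.2) ≠ 0}
  have hrho : Continuous fun z : S => rho z.1.1 z.1.2 := by unfold rho; fun_prop
  have hρ : Continuous fun x : S × ℝ => rho x.1.1.1 x.1.1.2 := hrho.comp continuous_fst
  have hsin : Continuous fun x : S × ℝ => sin (rho x.1.1.1 x.1.1.2) := continuous_sin.comp hρ
  have harc : Continuous fun x : S × ℝ => arcPath x.1.1.1 x.1.1.2 x.2 := by
    unfold arcPath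
    refine .add (.smul (.div (continuous_sin.comp (hρ.sub continuous_snd)) hsin
      fun x => x.1.2.2.2) (by fun_prop)) (.smul (.div (continuous_sin.comp continuous_snd) hsin
      fun x => x.1.2.2.2) (by fun_prop))
  have hcomp : Continuous fun x : S × ℝ => f (arcPath x.1.1.1 x.1.1.2 x.2) :=
    hf.comp_continuous harc fun x => arcPath_mem_sphere2 x.1.2.1 x.1.2.2.1 x.1.2.2.2 x.2
  exact intervalIntegral.continuous_parametric_intervalIntegral_of_continuous
    (f := fun (z : S) t => f (arcPath z.1.1 z.1.2 t)) hcomp hrho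

lemma tendsto_Iint {α : Type*} {l : Filter α} {f : E3 → ℝ} (hf : ContinuousOn f sphere2)
    {x y : α → E3} {x₀ y₀ : E3} (hx : Tendsto x l (𝓝 x₀)) (hy : Tendsto y l (𝓝 y₀))
    (hx_mem : ∀ᶠ k in l, x k ∈ sphere2) (hy_mem : ∀ᶠ k in l, y k ∈ sphere2)
    (hx₀ : x₀ ∈ sphere2) (hy₀ : y₀ ∈ sphere2) (h₀ : sin (rho x₀ y₀) ≠ 0) :
    Tendsto (fun k => Iint f (x k) (y k)) l (𝓝 (Iint f x₀ y₀)) := by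
  have hsin : ∀ᶠ k in l, sin (rho (x k) (y k)) ≠ 0 :=
    ((continuous_sin.tendsto _).comp (tendsto_rho hx hy)).eventually_ne h₀
  have hxy : Tendsto (fun k => (x k, y k)) l
      (𝓝[{z | z.1 ∈ sphere2 ∧ z.2 ∈ sphere2 ∧ sin (rho z.1 z.2) ≠ 0}] (x₀, y₀)) :=
    tendsto_nhdsWithin_iff.2 ⟨hx.prodMk_nhds hy, by
      filter_upwards [hx_mem, hy_mem, hsin] with k h₁ h₂ h₃ using ⟨h₁, h₂, h₃⟩⟩
  have hI := (continuousOn_Iint hf (x₀, y₀) ⟨hx₀, hy₀, h₀⟩).tendsto.comp hxy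
  exact hI

lemma Iint_add_Iint_neg {f : E3 → ℝ} (hf : ContinuousOn f sphere2) {p v : E3}
    (hp : p ∈ sphere2) (hv : UnitTangent p v) :
    Iint f p v + Iint f v (-p) = ∫ t in (0 : ℝ)..π, f (geo p v t) := by
  have hvp : ⟪v, -p⟫ = 0 := by rw [inner_neg_right, real_inner_comm, hv.2, neg_zero]
  have hcont : Continuous fun t => f (geo p v t) :=
    hf.comp_continuous (by unfold geo; fun_prop) (geo_mem_sphere2 hp hv)
  have h₁ : Iint f p v = ∫ t in (0 : ℝ)..(π / 2), f (geo p v t) := by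
    simp only [Iint, rho_eq_pi_div_two hv.2, arcPath_of_inner_eq_zero hv.2]
  have h₂ : Iint f v (-p) = ∫ t in (π / 2)..π, f (geo p v t) := by
    simp only [Iint, rho_eq_pi_div_two hvp, arcPath_neg_of_inner_eq_zero hv.2,
      intervalIntegral.integral_comp_add_right (fun t => f (geo p v t))]
    norm_num
  rw [h₁, h₂, intervalIntegral.integral_add_adjacent_intervals (hcont.intervalIntegrable _ _)
    (hcont.intervalIntegrable _ _)]

lemma eventually_inner_add_geo_nonneg {α : Type*} {l : Filter α} {p w : α → E3} {t : α → ℝ}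
    {p₀ e v : E3} (hp : Tendsto p l (𝓝 p₀)) (hw : Tendsto w l (𝓝 e))
    (ht : Tendsto t l (𝓝 π)) (ht_le : ∀ k, t k ≤ π) (hev : 0 < ⟪e, v⟫) :
    ∀ᶠ k in l, 0 ≤ ⟪p k + geo (p k) (w k) (t k), v⟫ := by
  have hmid : Tendsto (fun k => ⟪geo (p k) (w k) (t k / 2), v⟫) l (𝓝 ⟪e, v⟫) := by
    simpa [geo] using (tendsto_geo hp hw (ht.div_const 2)).inner (tendsto_const_nhds (x := v))
  filter_upwards [hmid.eventually_const_lt hev, ht.eventually_const_lt (neg_lt_self pi_pos)]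
    with k hk ht_pos
  rw [add_geo, real_inner_smul_left]
  have hcos : 0 ≤ cos (t k / 2) :=
    cos_nonneg_of_mem_Icc ⟨by linarith, by linarith [ht_le k]⟩
  positivity

theorem eventually_exists_midpoint_Iint_lt {α : Type*} {l : Filter α} {f : E3 → ℝ}
    (hf : ContinuousOn f sphere2) {ν : ℝ} {p w : α → E3} {t : α → ℝ} {p₀ e v : E3}
    (hp : ∀ k, p k ∈ sphere2) (hpw : ∀ k, UnitTangent (p k) (w k)) (ht_le : ∀ k, t k ≤ π)
    (hp_lim : Tendsto p l (𝓝 p₀)) (hw_lim : Tendsto w l (𝓝 e)) (ht_lim : Tendsto t l (𝓝 π))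
    (hp₀ : p₀ ∈ sphere2) (hv : UnitTangent p₀ v) (hev : 0 < ⟪e, v⟫)
    (hint : ∫ t in (0:ℝ)..π, f (geo p₀ v t) < -ν) :
    ∀ᶠ k in l, ∃ m, IsShortMidpoint (p k) (geo (p k) (w k) (t k)) m ∧
      Iint f (p k) m + Iint f m (geo (p k) (w k) (t k)) < -ν := by
  set q := fun k => geo (p k) (w k) (t k)
  set m := fun k => bisector (p k) (q k) v
  have hq_mem (k : α) : q k ∈ sphere2 := geo_mem_sphere2 (hp k) (hpw k) (t k)
  have hq_lim : Tendsto q l (𝓝 (-p₀)) := by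
    have h := tendsto_geo hp_lim hw_lim ht_lim
    rwa [show geo p₀ e π = -p₀ by simp [geo]] at h
  have hv₀ : v ≠ 0 := norm_ne_zero_iff.1 (hv.1.symm ▸ one_ne_zero)
  have hP_lim : Tendsto (fun k => perpPart (p k - q k) v) l (𝓝 v) := by
    refine tendsto_perpPart (hp_lim.sub hq_lim) ?_ ?_
    · rw [sub_neg_eq_add, ← two_smul ℝ]
      exact smul_ne_zero two_ne_zero (norm_ne_zero_iff.1 (hp₀.symm ▸ one_ne_zero))
    · rw [sub_neg_eq_add, inner_add_left, hv.2, add_zero]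
  have hm_lim : Tendsto m l (𝓝 v) := by
    simpa [m, bisector, hv.1] using (hP_lim.norm.inv₀ (by simpa using hv₀)).smul hP_lim
  have hP_ne : ∀ᶠ k in l, perpPart (p k - q k) v ≠ 0 := hP_lim.eventually_ne hv₀
  have hm_mem : ∀ᶠ k in l, m k ∈ sphere2 := by
    filter_upwards [hP_ne] with k hk using norm_smul_inv_norm hk
  have hpm_lt : ∀ᶠ k in l, ⟪p k, m k⟫ < 1 := by
    refine (hp_lim.inner hm_lim).eventually_lt_const ?_
    rw [hv.2]; exact one_pos
  have hIint : ∀ᶠ k in l, Iint f (p k) (m k) + Iint f (m k) (q k) < -ν := by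
    have hvp : ⟪v, -p₀⟫ = 0 := by rw [inner_neg_right, real_inner_comm, hv.2, neg_zero]
    have hp₀' : -p₀ ∈ sphere2 := by simpa [sphere2] using hp₀
    have hsin₁ : sin (rho p₀ v) ≠ 0 := by rw [rho_eq_pi_div_two hv.2, sin_pi_div_two]; norm_num
    have hsin₂ : sin (rho v (-p₀)) ≠ 0 := by rw [rho_eq_pi_div_two hvp, sin_pi_div_two]; norm_num
    have hlim := (tendsto_Iint hf hp_lim hm_lim (.of_forall hp) hm_mem hp₀ hv.1 hsin₁).add
      (tendsto_Iint hf hm_lim hq_lim hm_mem (.of_forall hq_mem) hv.1 hp₀' hsin₂)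
    rw [Iint_add_Iint_neg hf hp₀ hv] at hlim
    exact hlim.eventually_lt_const hint
  filter_upwards [hP_ne, hpm_lt, eventually_inner_add_geo_nonneg hp_lim hw_lim ht_lim ht_le hev,
    hIint] with k hk_ne hk_lt hk_nonneg hk_int
  exact ⟨m k, isShortMidpoint_bisector (hp k) (hq_mem k) hk_ne hk_lt hk_nonneg, hk_int⟩

theorem exists_short_broken_geodesic_with_negative_integral_general
    (f : E3 → ℝ) (hf : ContinuousOn f sphere2) (ν : ℝ)
    (h : ∀ p ∈ sphere2, ∀ u : E3, UnitTangent p u →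
      ∃ v : E3, UnitTangent p v ∧ 0 < ⟪u, v⟫ ∧
        (∫ t in (0:ℝ)..π, f (geo p v t)) < -ν) :
    ∃ ε > (0:ℝ), ∀ p ∈ sphere2, ∀ q ∈ sphere2,
      π - ε ≤ rho p q → rho p q ≤ π →
      ∃ m ∈ sphere2, 0 < rho p m ∧ rho p m = rho m q ∧
        rho p m + rho m q ≤ π ∧ Iint f p m + Iint f m q < -ν := by
  by_contra! hcon
  choose p hp q hq hρ_ge hρ_le hfail using fun n : ℕ => hcon (1 / (n + 1)) Nat.one_div_pos_of_nat
  choose w hw using fun n => exists_unitTangent_eq_geo (hp n) (hq n)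
  have hρ : Tendsto (fun n => rho (p n) (q n)) atTop (𝓝 π) := by
    refine tendsto_of_tendsto_of_tendsto_of_le_of_le ?_ tendsto_const_nhds hρ_ge hρ_le
    simpa using (tendsto_const_nhds (x := π)).sub tendsto_one_div_add_atTop_nhds_zero_nat
  obtain ⟨⟨p₀, e⟩, ⟨hp₀, he⟩, φ, hφ, hlim⟩ :=
    (isCompact_sphere2.prod isCompact_sphere2).tendsto_subseq (x := fun n => (p n, w n))
      fun n => ⟨hp n, (hw n).1.1⟩
  have hpe : ⟪p₀, e⟫ = 0 :=
    tendsto_nhds_unique (hlim.fst_nhds.inner hlim.snd_nhds) (by simp [fun n => (hw n).1.2])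
  obtain ⟨v, hv, hev, hint⟩ := h p₀ hp₀ e ⟨he, hpe⟩
  obtain ⟨k, m, ⟨hm, hpos, heq, hsum⟩, hlt⟩ := (eventually_exists_midpoint_Iint_lt hf
    (fun k => hp (φ k)) (fun k => (hw (φ k)).1) (fun k => hρ_le (φ k)) hlim.fst_nhds
    hlim.snd_nhds (hρ.comp hφ.tendsto_atTop) hp₀ hv hev hint).exists
  rw [← (hw (φ k)).2] at heq hsum hlt
  exact (hfail (φ k) m hm hpos heq hsum).not_gt hlt

/-- If `f` is continuous and integrates below `-ν` over some great half-circle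
in every open semicircle of directions at every point, then for some `ε > 0`,
any two points at round distance in `[π-ε, π]` can be joined by a two-arc
piecewise geodesic of total length at most `π`, with equal-length legs, over
which `f` integrates below `-ν`. -/
theorem exists_short_broken_geodesic_with_negative_integral
    (f : E3 → ℝ) (hf : ContinuousOn f sphere2) (ν : ℝ) (hν : 0 < ν)
    (h : ∀ p ∈ sphere2, ∀ u : E3, UnitTangent p u →
      ∃ v : E3, UnitTangent p v ∧ 0 < ⟪u, v⟫ ∧
        (∫ t in (0:ℝ)..π, f (geo p v t)) < -ν) :
    ∃ ε > (0:ℝ), ∀ p ∈ sphere2, ∀ q ∈ sphere2,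
      π - ε ≤ rho p q → rho p q ≤ π →
      ∃ m ∈ sphere2, 0 < rho p m ∧ rho p m = rho m q ∧
        rho p m + rho m q ≤ π ∧ Iint f p m + Iint f m q < -ν :=
  exists_short_broken_geodesic_with_negative_integral_general f hf ν h
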